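/- For p odd and s an invertible Niho exponent over L, W_{L,s}(a) ≥ 0 for all a ∈ F, where L is the quadratic extension of F with |F| = p^n. -/

import Mathlib

open scoped BigOperators

/-- The Weil sum `W_{F,s}(a) = ∑_{x ∈ F} μ(x^s - a x)`, where `μ` is the canonical
additive character `μ(x) = ζ_p^{Tr_{F/𝔽_p}(x)}` of the finite field `F`. -/
noncomputable def weilSum (p : ℕ) (F : Type) [Field F] [Fintype F]
    [Algebra (ZMod p) F] (s : ℕ) (a : F) : ℂ :=
  ∑ x : F, Complex.exp (2 * Real.pi * Complex.I *
    ((Algebra.trace (ZMod p) F (x ^ s - a * x)).val : ℂ) / (p : ℂ))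

/-!
Since `s ≡ 1 [MOD q - 1]`, the map `x ↦ x^s - a x` commutes with multiplication by `F^*`, so
the Weil sum over `L^*` splits along the orbits `x F^*`, which are the fibres of `x ↦ x^(q-1)`;
there are at most `q + 1` of them. On the orbit of `x` the sum is `∑_{y ∈ F^*} μ(y b)` with
`b = x^s - a x`, which is `q - 1` or `-1` according as `b` is or is not trace-orthogonal to `F`.
Hence `W = 1 + q N - #orbits`, where `N` counts the orthogonal orbits. The orbit on which
`x^(q-1) = -1` is orthogonal: there `(y b)^q = -y b` for `y ∈ F`, and the absolute trace is
invariant under `z ↦ z^q`, so `Tr (y b) = 0` as `p` is odd. Thus `N ≥ 1` and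
`W ≥ 1 + q - (q + 1) = 0`.
-/

open Finset

lemma Polynomial.card_nthRootsFinset_le {R : Type*} [CommRing R] [IsDomain R] (n : ℕ) (a : R) :
    #(nthRootsFinset n a) ≤ n := by
  classical
  rw [nthRootsFinset_def]
  exact (Multiset.toFinset_card_le _).trans (card_nthRoots n a)

lemma ZMod.sum_stdAddChar_comp_eq_ite {G : Type*} [AddCommGroup G] [Fintype G] {N : ℕ} [NeZero N]
    (φ : G →+ ZMod N) :
    ∑ g, stdAddChar (φ g) = if ∀ g, φ g = 0 then (Fintype.card G : ℂ) else 0 := by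
  classical
  have hφ : stdAddChar.compAddMonoidHom φ = 0 ↔ ∀ g, φ g = 0 := by
    simp only [AddChar.ext_iff, AddChar.compAddMonoidHom_apply, AddChar.zero_apply,
      ← (stdAddChar (N := N)).map_zero_eq_one, injective_stdAddChar.eq_iff]
  simp_rw [← AddChar.compAddMonoidHom_apply, AddChar.sum_eq_ite, hφ]

namespace FiniteField

variable {K : Type*} [Field K] [Fintype K]

lemma pow_one_add_mul_card_sub_one (k : ℕ) (y : K) : y ^ (1 + k * (Fintype.card K - 1)) = y := by
  rcases eq_or_ne y 0 with rfl | hy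
  · simp
  · rw [pow_add, pow_one, pow_mul', pow_card_sub_one_eq_one y hy, one_pow, mul_one]

lemma exists_pow_eq_neg_one {d : ℕ} (hd : 2 * d ∣ Fintype.card K - 1) :
    ∃ x : K, x ^ d = -1 := by
  obtain ⟨g, hg⟩ := IsCyclic.exists_ofOrder_eq_natCard (α := Kˣ)
  rw [Nat.card_units, Nat.card_eq_fintype_card] at hg
  have hζ : IsPrimitiveRoot (g : K) (Fintype.card K - 1) :=
    IsPrimitiveRoot.coe_units_iff.2 (hg ▸ IsPrimitiveRoot.orderOf g)
  obtain ⟨m, hm⟩ := hd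
  have hdm : d * m ≠ 0 := by
    have := Fintype.one_lt_card (α := K)
    intro h
    rw [mul_assoc, h] at hm
    omega
  refine ⟨(g : K) ^ m, ?_⟩
  have h2 : IsPrimitiveRoot ((g : K) ^ (d * m)) 2 := by
    convert hζ.pow_of_dvd hdm ⟨2, by rw [hm]; ring⟩
    rw [hm, mul_assoc, Nat.mul_div_cancel _ (Nat.pos_of_ne_zero hdm)]
  rw [← pow_mul, mul_comm, h2.eq_neg_one_of_two_right]

lemma card_image_pow_le [DecidableEq K] {d e : ℕ} (he : 0 < e)
    (hde : d * e = Fintype.card K - 1) : #((univ.erase (0 : K)).image (· ^ d)) ≤ e := by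
  have hsub : (univ.erase (0 : K)).image (· ^ d) ⊆ Polynomial.nthRootsFinset e 1 := by
    simp only [subset_iff, mem_image, mem_erase, mem_univ, and_true]
    rintro _ ⟨x, hx, rfl⟩
    rw [Polynomial.mem_nthRootsFinset he, ← pow_mul, hde, pow_card_sub_one_eq_one x hx]
  exact (card_le_card hsub).trans (Polynomial.card_nthRootsFinset_le _ _)

end FiniteField

section Trace

variable {K L : Type*} [Field K] [Fintype K] [Field L] [Fintype L] [Algebra K L]

lemma Algebra.trace_pow_card_pow (n : ℕ) (z : L) :
    Algebra.trace K L (z ^ Fintype.card K ^ n) = Algebra.trace K L z := by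
  have h := Algebra.trace_eq_of_algEquiv (FiniteField.frobeniusAlgEquivOfAlgebraic K L ^ n) z
  rwa [AlgEquiv.coe_pow, FiniteField.coe_frobeniusAlgEquivOfAlgebraic_iterate] at h

lemma Algebra.trace_eq_zero_of_pow_card_pow_eq_neg (hK : ringChar K ≠ 2) {n : ℕ} {z : L}
    (hz : z ^ Fintype.card K ^ n = -z) : Algebra.trace K L z = 0 := by
  have h := Algebra.trace_pow_card_pow (K := K) (L := L) n z
  rwa [hz, map_neg, Ring.eq_self_iff_eq_zero_of_char_ne_two hK] at h

end Trace

section Fibers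

variable {F L : Type*} [Field F] [Fintype F] [DecidableEq F] [Field L] [Fintype L] [Algebra F L]
  [DecidableEq L]

local notation "q" => Fintype.card F

lemma FiniteField.filter_pow_card_sub_one_eq_image {x₀ : L} (hx₀ : x₀ ≠ 0) :
    {x ∈ univ.erase (0 : L) | x ^ (q - 1) = x₀ ^ (q - 1)} =
      (univ.erase 0).image fun y : F ↦ algebraMap F L y * x₀ := by
  have hinj : Function.Injective fun y : F ↦ algebraMap F L y * x₀ :=
    (mul_left_injective₀ hx₀).comp (algebraMap F L).injective
  refine (eq_of_subset_of_card_le ?_ ?_).symm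
  · simp only [subset_iff, mem_image, mem_erase, mem_filter, mem_univ, and_true]
    rintro _ ⟨y, hy, rfl⟩
    refine ⟨mul_ne_zero ((map_ne_zero _).2 hy) hx₀, ?_⟩
    rw [mul_pow, ← map_pow, FiniteField.pow_card_sub_one_eq_one y hy, map_one, one_mul]
  · have hq : 0 < q - 1 := Nat.sub_pos_of_lt Fintype.one_lt_card
    calc #{x ∈ univ.erase 0 | x ^ (q - 1) = x₀ ^ (q - 1)}
        ≤ #(Polynomial.nthRootsFinset (q - 1) (x₀ ^ (q - 1))) :=
          card_le_card fun x hx ↦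
            (Polynomial.mem_nthRootsFinset hq _).2 (mem_filter.1 hx).2
      _ ≤ q - 1 := Polynomial.card_nthRootsFinset_le _ _
      _ = _ := by rw [card_image_of_injective _ hinj, card_erase_of_mem (mem_univ _), card_univ]

end Fibers

section WeilSum

noncomputable def traceAddChar (p : ℕ) [NeZero p] (L : Type*) [CommRing L] [Algebra (ZMod p) L] :
    AddChar L ℂ :=
  ZMod.stdAddChar.compAddMonoidHom (Algebra.trace (ZMod p) L).toAddMonoidHom

lemma weilSum_eq_sum_traceAddChar (p : ℕ) [NeZero p] (L : Type) [Field L] [Fintype L]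
    [Algebra (ZMod p) L] (s : ℕ) (a : L) :
    weilSum p L s a = ∑ x, traceAddChar p L (x ^ s - a * x) := by
  simp [weilSum, traceAddChar, ZMod.stdAddChar_apply, ZMod.toCircle_apply]

def TraceOrthogonal (p : ℕ) (F : Type*) {L : Type*} [CommRing F] [CommRing L]
    [Algebra (ZMod p) L] [Algebra F L] (b : L) : Prop :=
  ∀ y : F, Algebra.trace (ZMod p) L (algebraMap F L y * b) = 0

variable {p : ℕ} {F : Type*} {L : Type} [Field F] [Field L] [Algebra (ZMod p) L] [Algebra F L]

lemma TraceOrthogonal.algebraMap_mul {b : L} (hb : TraceOrthogonal p F b) (y : F) :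
    TraceOrthogonal p F (algebraMap F L y * b) := fun z ↦ by
  rw [← mul_assoc, ← map_mul]
  exact hb (z * y)

variable [Fintype F]

local notation "q" => Fintype.card F

open scoped Classical in
lemma sum_traceAddChar_algebraMap_mul [NeZero p] (b : L) :
    ∑ y : F, traceAddChar p L (algebraMap F L y * b) =
      if TraceOrthogonal p F b then (q : ℂ) else 0 := by
  convert ZMod.sum_stdAddChar_comp_eq_ite ((Algebra.trace (ZMod p) L).toAddMonoidHom.comp
    ((AddMonoidHom.mulRight b).comp (algebraMap F L).toAddMonoidHom)) <;> rfl

def nihoMap (k : ℕ) (a : F) (x : L) : L := x ^ (1 + k * (q - 1)) - algebraMap F L a * x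

variable (p) in
/-- `u` labels the orbit `{x | x ^ (q - 1) = u}` of `F^*` acting on `L^*`. -/
def FiberTraceOrthogonal (k : ℕ) (a : F) (u : L) : Prop :=
  ∀ x : L, x ^ (q - 1) = u → TraceOrthogonal p F (nihoMap k a x)

variable (k : ℕ) (a : F)

lemma nihoMap_zero : nihoMap k a (0 : L) = 0 := by
  rw [nihoMap, zero_pow (by omega), mul_zero, sub_zero]

lemma nihoMap_algebraMap_mul (y : F) (x : L) :
    nihoMap k a (algebraMap F L y * x) = algebraMap F L y * nihoMap k a x := by
  rw [nihoMap, nihoMap, mul_pow, ← map_pow, FiniteField.pow_one_add_mul_card_sub_one]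
  ring

lemma nihoMap_of_pow_eq_neg_one {x : L} (hx : x ^ (q - 1) = -1) :
    nihoMap k a x = x * algebraMap F L ((-1) ^ k - a) := by
  rw [nihoMap, pow_add, pow_one, pow_mul', hx, map_sub, map_pow, map_neg, map_one]
  ring

lemma fiberTraceOrthogonal_neg_one [Fact p.Prime] [Fintype L] (hp : p ≠ 2) {n : ℕ}
    (hF : q = p ^ n) : FiberTraceOrthogonal p k a (-1 : L) := fun x hx y ↦ by
  have hxq : x ^ q = -x := by
    rw [← Nat.sub_one_add_one Fintype.card_ne_zero, pow_succ, hx, neg_one_mul]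
  rw [nihoMap_of_pow_eq_neg_one k a hx, mul_left_comm, ← map_mul]
  refine Algebra.trace_eq_zero_of_pow_card_pow_eq_neg (n := n) (by rwa [ZMod.ringChar_zmod_n]) ?_
  rw [ZMod.card, ← hF, mul_pow, hxq, ← map_pow, FiniteField.pow_card, neg_mul]

variable [Fintype L] [DecidableEq F] [DecidableEq L]

lemma fiberTraceOrthogonal_pow_card_sub_one_iff {x₀ : L} (hx₀ : x₀ ≠ 0) :
    FiberTraceOrthogonal p k a (x₀ ^ (q - 1)) ↔ TraceOrthogonal p F (nihoMap k a x₀) := by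
  refine ⟨fun h ↦ h x₀ rfl, fun h x hx ↦ ?_⟩
  have hx0 : x ≠ 0 :=
    ne_zero_pow (Nat.sub_pos_of_lt Fintype.one_lt_card).ne' (hx ▸ pow_ne_zero _ hx₀)
  have hmem : x ∈ {x ∈ univ.erase (0 : L) | x ^ (q - 1) = x₀ ^ (q - 1)} :=
    mem_filter.2 ⟨mem_erase.2 ⟨hx0, mem_univ x⟩, hx⟩
  rw [FiniteField.filter_pow_card_sub_one_eq_image hx₀] at hmem
  obtain ⟨y, -, rfl⟩ := mem_image.1 hmem
  rw [nihoMap_algebraMap_mul]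
  exact h.algebraMap_mul y

open scoped Classical in
lemma sum_fiber_traceAddChar_nihoMap [NeZero p] {x₀ : L} (hx₀ : x₀ ≠ 0) :
    ∑ x ∈ univ.erase 0 with x ^ (q - 1) = x₀ ^ (q - 1), traceAddChar p L (nihoMap k a x) =
      (if FiberTraceOrthogonal p k a (x₀ ^ (q - 1)) then (q : ℂ) else 0) - 1 := by
  rw [FiniteField.filter_pow_card_sub_one_eq_image hx₀,
    sum_image fun y _ z _ h ↦ (algebraMap F L).injective (mul_right_cancel₀ hx₀ h),
    sum_erase_eq_sub (mem_univ 0)]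
  simp only [nihoMap_algebraMap_mul, sum_traceAddChar_algebraMap_mul,
    fiberTraceOrthogonal_pow_card_sub_one_iff k a hx₀, map_zero, zero_mul, nihoMap_zero,
    AddChar.map_zero_eq_one]

open scoped Classical in
theorem weilSum_niho_eq [NeZero p] :
    weilSum p L (1 + k * (q - 1)) (algebraMap F L a) =
      1 + q * #{u ∈ (univ.erase (0 : L)).image (· ^ (q - 1)) | FiberTraceOrthogonal p k a u} -
        #((univ.erase (0 : L)).image (· ^ (q - 1))) := by
  rw [weilSum_eq_sum_traceAddChar, ← add_sum_erase _ _ (mem_univ 0)]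
  change traceAddChar p L (nihoMap k a 0) +
    ∑ x ∈ univ.erase 0, traceAddChar p L (nihoMap k a x) = _
  rw [nihoMap_zero, AddChar.map_zero_eq_one,
    ← sum_image' (f := fun u ↦ (if FiberTraceOrthogonal p k a u then (q : ℂ) else 0) - 1) _
      fun x₀ hx₀ ↦ (sum_fiber_traceAddChar_nihoMap k a (ne_of_mem_erase hx₀)).symm,
    sum_sub_distrib, sum_ite, sum_const_zero, add_zero, sum_const, sum_const, nsmul_eq_mul,
    nsmul_eq_mul, mul_one]
  ring

end WeilSum

theorem weil_sum_nonneg_on_base_field_general (p n : ℕ) [Fact p.Prime]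
    (F L : Type) [Field F] [Fintype F] [Field L] [Fintype L]
    [Algebra (ZMod p) L] [Algebra F L]
    (hF : Fintype.card F = p ^ n) (hL : Fintype.card L = p ^ (2 * n))
    (k s : ℕ) (hsk : s = 1 + k * (p ^ n - 1))
    (hp : Odd p) (a : F) :
    ∃ m : ℤ, weilSum p L s (algebraMap F L a) = (m : ℂ) ∧ 0 ≤ m := by
  classical
  set q := Fintype.card F
  have hp2 : p ≠ 2 := by rintro rfl; exact Nat.not_odd_iff_even.2 even_two hp
  have hLq : Fintype.card L - 1 = (q - 1) * (q + 1) := by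
    rw [hL, mul_comm 2, pow_mul, ← hF, mul_comm, ← Nat.sq_sub_sq, one_pow]
  obtain ⟨x₀, hx₀⟩ : ∃ x : L, x ^ (q - 1) = -1 := by
    refine FiniteField.exists_pow_eq_neg_one ?_
    rw [hLq, mul_comm 2]
    exact mul_dvd_mul_left _ (hF ▸ hp.pow).add_one.two_dvd
  have hx₀_ne : x₀ ≠ 0 :=
    ne_zero_pow (Nat.sub_pos_of_lt Fintype.one_lt_card).ne' (hx₀ ▸ neg_ne_zero.2 one_ne_zero)
  subst hsk
  rw [← hF, weilSum_niho_eq]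
  set T := (univ.erase (0 : L)).image (· ^ (q - 1))
  have hT : #T ≤ q + 1 := FiniteField.card_image_pow_le q.succ_pos hLq.symm
  have hN : 0 < #{u ∈ T | FiberTraceOrthogonal p k a u} :=
    card_pos.2 ⟨-1, mem_filter.2
      ⟨mem_image.2 ⟨x₀, mem_erase.2 ⟨hx₀_ne, mem_univ _⟩, hx₀⟩,
        fiberTraceOrthogonal_neg_one k a hp2 hF⟩⟩
  refine ⟨1 + q * #{u ∈ T | FiberTraceOrthogonal p k a u} - #T, by push_cast; rfl, ?_⟩
  nlinarith

/-- for `p` odd and `s` an invertible Niho exponent over `L`,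
`W_{L,s}(a)` is a nonnegative rational integer for all `a ∈ F`. -/
theorem weil_sum_nonneg_on_base_field (p n : ℕ) [Fact p.Prime] (hn : 0 < n)
    (F L : Type) [Field F] [Fintype F] [Field L] [Fintype L]
    [Algebra (ZMod p) L] [Algebra F L]
    (hF : Fintype.card F = p ^ n) (hL : Fintype.card L = p ^ (2 * n))
    (k s : ℕ) (hsk : s = 1 + k * (p ^ n - 1)) (hs : Nat.Coprime s (p ^ (2 * n) - 1))
    (hp : Odd p) (a : F) :
    ∃ m : ℤ, weilSum p L s (algebraMap F L a) = (m : ℂ) ∧ 0 ≤ m :=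
  weil_sum_nonneg_on_base_field_general p n F L hF hL k s hsk hp a
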